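/- arXiv:2007.04261 — 5 statements merged into one kernel-verified Lean document; each statement's English description precedes it below -/
import Mathlib

section
/- Let d, n be natural numbers with d ≥ 2 and n ≥ 1. Let V be a finite set with |V| = n and let 𝓕 be a family of subsets of V satisfying d·|𝓕| ≤ n·(2^d − 2). Then there exists a vertex x ∈ V such that |𝓕_x| ≥ |𝓕| − (2^{d−1} − 2). -/
/-- The trace of a family `𝓕` at a vertex `x`: the family `{F \ {x} : F ∈ 𝓕}`. -/
def traceAt {α : Type*} [DecidableEq α] (𝓕 : Finset (Finset α)) (x : α) :
    Finset (Finset α) :=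
  𝓕.image fun F => F.erase x

/-!
Down-compressions turn `𝓕` into a lower set `𝓖` of the same size without enlarging any trace,
and for a lower set the trace at `x` has `|𝓖| - deg x` members. So if every trace were small,
every vertex would have degree at least `2^(d-1) - 1` in `𝓖`. The link of a vertex in a lower set
is again a lower set, and a lower set `𝓛` with at least `2^k - 1` members satisfies
`∑_{G ∈ 𝓛} 1/(|G|+1) ≥ (2^(k+1) - 2)/(k+1)`: integrate over `[0, 1]` the pointwise bound
`∑_{G ∈ 𝓛} z^|G| ≥ (1+z)^k - z^k`, an instance of the Kruskal–Katona type fact that initial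
segments of the colexicographic order minimise `∑ z^|G|`. Summing the link bounds over all
vertices counts every nonempty member of `𝓖` once, so `d (|𝓖| - 1) ≥ n (2^d - 2)`,
contradicting the hypothesis.
-/

open Finset

theorem Nat.bitIndices_two_pow_add {q i : ℕ} (hi : i < 2 ^ q) :
    (2 ^ q + i).bitIndices = i.bitIndices ++ [q] := by
  have hsorted : (i.bitIndices ++ [q]).SortedLT := by
    rw [List.sortedLT_iff_pairwise, List.pairwise_append]
    refine ⟨Nat.bitIndices_sorted.pairwise, by simp, fun a ha b hb => ?_⟩
    rw [List.mem_singleton.mp hb]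
    exact (Nat.pow_lt_pow_iff_right (by norm_num)).mp
      ((two_pow_le_of_mem_bitIndices ha).trans_lt hi)
  simpa [add_comm] using Nat.bitIndices_sum_map_two_pow hsorted

theorem Nat.exists_eq_two_pow_add {n : ℕ} (hn : n ≠ 0) : ∃ q r, n = 2 ^ q + r ∧ r < 2 ^ q :=
  ⟨Nat.log 2 n, n - 2 ^ Nat.log 2 n, (Nat.add_sub_of_le (Nat.pow_log_le_self 2 hn)).symm, by
    have := Nat.lt_pow_succ_log_self one_lt_two n
    rw [pow_succ] at this
    omega⟩

-- `i ↦ i.bitIndices` enumerates the finsets of `ℕ` in colex order, so this is `∑ z ^ |G|` over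
-- the first `m` of them.
noncomputable def colexProfile (z : ℝ) (m : ℕ) : ℝ :=
  ∑ i ∈ range m, z ^ i.bitIndices.length

section colexProfile

variable {z : ℝ}

@[simp] theorem colexProfile_zero (z : ℝ) : colexProfile z 0 = 0 := by
  simp [colexProfile]

theorem colexProfile_two_pow_add (z : ℝ) {q r : ℕ} (hr : r ≤ 2 ^ q) :
    colexProfile z (2 ^ q + r) = colexProfile z (2 ^ q) + z * colexProfile z r := by
  rw [colexProfile, sum_range_add, colexProfile, colexProfile, mul_sum]
  congr 1
  refine sum_congr rfl fun i hi => ?_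
  rw [Nat.bitIndices_two_pow_add ((mem_range.mp hi).trans_le hr), List.length_append,
    List.length_singleton, pow_succ']

theorem colexProfile_two_pow (z : ℝ) (q : ℕ) : colexProfile z (2 ^ q) = (1 + z) ^ q := by
  induction q with
  | zero => simp [colexProfile]
  | succ q ih => rw [pow_succ, mul_two, colexProfile_two_pow_add z le_rfl, ih]; ring

theorem colexProfile_two_pow_sub_one (z : ℝ) (k : ℕ) :
    colexProfile z (2 ^ k - 1) = (1 + z) ^ k - z ^ k := by
  induction k with
  | zero => simp
  | succ k ih =>
    have h : 2 ^ (k + 1) - 1 = 2 ^ k + (2 ^ k - 1) := by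
      rw [pow_succ]; have := k.one_le_two_pow; omega
    rw [h, colexProfile_two_pow_add z (Nat.sub_le _ _), colexProfile_two_pow, ih]
    ring

theorem colexProfile_nonneg (hz : 0 ≤ z) (m : ℕ) : 0 ≤ colexProfile z m :=
  sum_nonneg fun _ _ => pow_nonneg hz _

theorem colexProfile_mono (hz : 0 ≤ z) : Monotone (colexProfile z) := fun _ _ h =>
  sum_le_sum_of_subset_of_nonneg (range_subset_range.mpr h) fun _ _ _ => pow_nonneg hz _

theorem colexProfile_le_of_le_two_pow (hz : 0 ≤ z) {m k : ℕ} (h : m ≤ 2 ^ k) :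
    colexProfile z m ≤ (1 + z) ^ k :=
  colexProfile_two_pow z k ▸ colexProfile_mono hz h

local notation "c" => colexProfile z

theorem pow_add_colexProfile_le_add_of_forall_lt (hz0 : 0 ≤ z) (hz1 : z ≤ 1) {k u v w : ℕ}
    (hu : u < 2 ^ k) (hv : v < 2 ^ k) (huvw : u + v = 2 ^ k + w)
    (ih_add : ∀ s t, s + t < u + v → c (s + t) ≤ c s + c t)
    (ih_pow : ∀ k s t w, s < 2 ^ k → t < 2 ^ k → s + t = 2 ^ k + w → s + t < u + v →
      (1 + z) ^ k + c w ≤ c s + c t) :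
    (1 + z) ^ k + c w ≤ c u + c v := by
  wlog huv : u ≤ v generalizing u v
  · rw [add_comm (c u)]
    exact this hv hu (by omega) (by rwa [add_comm]) (by rwa [add_comm]) (by omega)
  obtain ⟨K, rfl⟩ : ∃ K, k = K + 1 := Nat.exists_eq_add_one.mpr (by
    rcases k with _ | _ <;> omega)
  have hpow : 2 ^ (K + 1) = 2 ^ K + 2 ^ K := by rw [pow_succ, mul_two]
  obtain ⟨v', rfl⟩ : ∃ v', v = 2 ^ K + v' := Nat.exists_eq_add_of_le (by omega)
  have hcv' := colexProfile_le_of_le_two_pow hz0 (k := K) (m := v') (by omega)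
  rw [colexProfile_two_pow_add z (by omega), colexProfile_two_pow]
  by_cases huK : 2 ^ K ≤ u
  · obtain ⟨u', rfl⟩ := Nat.exists_eq_add_of_le huK
    rw [colexProfile_two_pow_add z (by omega), colexProfile_two_pow]
    by_cases hwK : 2 ^ K ≤ w
    · obtain ⟨w', rfl⟩ := Nat.exists_eq_add_of_le hwK
      have := ih_pow K u' v' w' (by omega) (by omega) (by omega) (by omega)
      rw [colexProfile_two_pow_add z (by omega), colexProfile_two_pow, pow_succ]
      linarith [mul_le_mul_of_nonneg_left this hz0]
    · have hw : w = u' + v' := by omega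
      have hcw := colexProfile_le_of_le_two_pow hz0 (k := K) (m := w) (by omega)
      have := ih_add u' v' (by omega)
      rw [← hw] at this
      rw [pow_succ]
      linarith [mul_le_mul_of_nonneg_left this hz0,
        mul_le_mul_of_nonneg_left hcw (sub_nonneg.mpr hz1)]
  · have := ih_pow K u v' w (by omega) (by omega) (by omega) (by omega)
    rw [pow_succ]
    linarith [mul_le_mul_of_nonneg_left hcv' (sub_nonneg.mpr hz1)]

theorem colexProfile_add_le_add_mul_of_forall_lt (hz0 : 0 ≤ z) {a b : ℕ} (hba : b ≤ a)
    (ih_mul : ∀ s t, t ≤ s → s + t < a + b → c (s + t) ≤ c s + z * c t)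
    (ih_add : ∀ s t, s + t < a + b → c (s + t) ≤ c s + c t)
    (ih_pow : ∀ k s t w, s < 2 ^ k → t < 2 ^ k → s + t = 2 ^ k + w → s + t < a + b →
      (1 + z) ^ k + c w ≤ c s + c t) :
    c (a + b) ≤ c a + z * c b := by
  rcases Nat.eq_zero_or_pos b with rfl | hb
  · simp
  obtain ⟨q, r, hqr, hr⟩ := Nat.exists_eq_two_pow_add (n := a + b) (by omega)
  rw [hqr, colexProfile_two_pow_add z hr.le, colexProfile_two_pow]
  by_cases haq : 2 ^ q ≤ a
  · obtain ⟨a', rfl⟩ := Nat.exists_eq_add_of_le haq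
    rw [colexProfile_two_pow_add z (by omega), colexProfile_two_pow]
    have := ih_add a' b (by omega)
    rw [show a' + b = r by omega] at this
    linarith [mul_le_mul_of_nonneg_left this hz0]
  obtain ⟨K, rfl⟩ : ∃ K, q = K + 1 := Nat.exists_eq_add_one.mpr (by
    rcases q with _ | _ <;> omega)
  have hpow : 2 ^ (K + 1) = 2 ^ K + 2 ^ K := by rw [pow_succ, mul_two]
  obtain ⟨a', rfl⟩ : ∃ a', a = 2 ^ K + a' := Nat.exists_eq_add_of_le (by omega)
  rw [colexProfile_two_pow_add z (by omega), colexProfile_two_pow, pow_succ]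
  by_cases hbK : 2 ^ K ≤ b
  · obtain ⟨b', rfl⟩ := Nat.exists_eq_add_of_le hbK
    have := ih_mul a' b' (by omega) (by omega)
    rw [show a' + b' = r by omega] at this
    rw [colexProfile_two_pow_add z (by omega), colexProfile_two_pow]
    linarith [mul_le_mul_of_nonneg_left this hz0]
  · have := ih_pow K a' b r (by omega) (by omega) (by omega) (by omega)
    linarith [mul_le_mul_of_nonneg_left this hz0]

-- The second inequality strengthens subadditivity, as `c (2 ^ k + w) = (1 + z) ^ k + z * c w`.
-- The induction step for each half uses the other one.
theorem colexProfile_add_le_add_mul_and_pow_add_le (hz0 : 0 ≤ z) (hz1 : z ≤ 1) (n : ℕ) :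
    (∀ a b, b ≤ a → a + b = n → c (a + b) ≤ c a + z * c b) ∧
    (∀ k u v w, u < 2 ^ k → v < 2 ^ k → u + v = 2 ^ k + w → u + v = n →
      (1 + z) ^ k + c w ≤ c u + c v) := by
  induction n using Nat.strong_induction_on with
  | _ n ih =>
  have ih_mul : ∀ s t, t ≤ s → s + t < n → c (s + t) ≤ c s + z * c t :=
    fun s t h hst => (ih _ hst).1 s t h rfl
  have ih_add : ∀ s t, s + t < n → c (s + t) ≤ c s + c t := fun s t hst => by
    rcases le_total t s with h | h
    · linarith [ih_mul s t h hst, mul_le_of_le_one_left (colexProfile_nonneg hz0 t) hz1]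
    · linarith [add_comm s t ▸ ih_mul t s h (by omega),
        mul_le_of_le_one_left (colexProfile_nonneg hz0 s) hz1]
  have ih_pow : ∀ k s t w, s < 2 ^ k → t < 2 ^ k → s + t = 2 ^ k + w → s + t < n →
      (1 + z) ^ k + c w ≤ c s + c t :=
    fun k s t w hs ht hst hlt => (ih _ hlt).2 k s t w hs ht hst rfl
  refine ⟨fun a b hba hab => ?_, fun k u v w hu hv huvw huv => ?_⟩
  · subst hab
    exact colexProfile_add_le_add_mul_of_forall_lt hz0 hba ih_mul ih_add ih_pow
  · subst huv
    exact pow_add_colexProfile_le_add_of_forall_lt hz0 hz1 hu hv huvw ih_add ih_pow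

theorem colexProfile_add_le_add_mul (hz0 : 0 ≤ z) (hz1 : z ≤ 1) {a b : ℕ} (hba : b ≤ a) :
    c (a + b) ≤ c a + z * c b :=
  (colexProfile_add_le_add_mul_and_pow_add_le hz0 hz1 _).1 a b hba rfl

end colexProfile

section Family

variable {α : Type*}

noncomputable def profile (𝓛 : Finset (Finset α)) (z : ℝ) : ℝ := ∑ G ∈ 𝓛, z ^ G.card

theorem integral_profile (𝓛 : Finset (Finset α)) :
    ∫ t in (0 : ℝ)..1, profile 𝓛 t = ∑ G ∈ 𝓛, ((#G : ℝ) + 1)⁻¹ := by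
  simp [profile, intervalIntegral.integral_finsetSum, integral_pow]

variable [DecidableEq α]

theorem Finset.sum_memberSubfamily_insert {M : Type*} [AddCommMonoid M] (f : Finset α → M)
    (a : α) (𝓛 : Finset (Finset α)) :
    ∑ G ∈ 𝓛.memberSubfamily a, f (insert a G) = ∑ F ∈ 𝓛 with a ∈ F, f F := by
  rw [← image_insert_memberSubfamily, sum_image]
  intro s hs t ht hst
  rw [mem_coe, mem_memberSubfamily] at hs ht
  rw [← erase_insert hs.2, hst, erase_insert ht.2]

theorem profile_eq_nonMemberSubfamily_add (𝓛 : Finset (Finset α)) (a : α) (z : ℝ) :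
    profile 𝓛 z = profile (𝓛.nonMemberSubfamily a) z + z * profile (𝓛.memberSubfamily a) z := by
  rw [profile, profile, profile, mul_sum, ← sum_filter_not_add_sum_filter 𝓛 (a ∈ ·),
    ← sum_memberSubfamily_insert]
  congr 1
  refine sum_congr rfl fun G hG => ?_
  rw [card_insert_of_notMem (mem_memberSubfamily.mp hG).2, pow_succ']

theorem colexProfile_card_le_profile {z : ℝ} (hz0 : 0 ≤ z) (hz1 : z ≤ 1)
    {𝓛 : Finset (Finset α)} (h𝓛 : IsLowerSet (𝓛 : Set (Finset α))) :
    colexProfile z #𝓛 ≤ profile 𝓛 z := by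
  induction 𝓛 using memberFamily_induction_on with
  | empty => simp [profile]
  | singleton_empty => simp [profile, colexProfile]
  | @subfamily a 𝓛 ih₀ ih₁ =>
    have hle := card_le_card (h𝓛.memberSubfamily_subset_nonMemberSubfamily (a := a))
    calc colexProfile z #𝓛
        = colexProfile z (#(𝓛.nonMemberSubfamily a) + #(𝓛.memberSubfamily a)) := by
          rw [add_comm, card_memberSubfamily_add_card_nonMemberSubfamily]
      _ ≤ colexProfile z #(𝓛.nonMemberSubfamily a) + z * colexProfile z #(𝓛.memberSubfamily a) :=
          colexProfile_add_le_add_mul hz0 hz1 hle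
      _ ≤ profile (𝓛.nonMemberSubfamily a) z + z * profile (𝓛.memberSubfamily a) z :=
          add_le_add (ih₀ h𝓛.nonMemberSubfamily)
            (mul_le_mul_of_nonneg_left (ih₁ h𝓛.memberSubfamily) hz0)
      _ = profile 𝓛 z := (profile_eq_nonMemberSubfamily_add 𝓛 a z).symm

theorem div_le_sum_inv_card_add_one {k : ℕ} {𝓛 : Finset (Finset α)}
    (h𝓛 : IsLowerSet (𝓛 : Set (Finset α))) (hcard : 2 ^ k ≤ #𝓛 + 1) :
    ((2 : ℝ) ^ (k + 1) - 2) / (k + 1) ≤ ∑ G ∈ 𝓛, ((#G : ℝ) + 1)⁻¹ := by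
  have hpoint : ∀ t ∈ Set.Icc (0 : ℝ) 1, (1 + t) ^ k - t ^ k ≤ profile 𝓛 t :=
    fun t ⟨ht0, ht1⟩ => colexProfile_two_pow_sub_one t k ▸
      (colexProfile_mono ht0 (by omega)).trans (colexProfile_card_le_profile ht0 ht1 h𝓛)
  have hint : ∫ t in (0 : ℝ)..1, ((1 + t) ^ k - t ^ k) = ((2 : ℝ) ^ (k + 1) - 2) / (k + 1) := by
    rw [intervalIntegral.integral_sub (by apply Continuous.intervalIntegrable; fun_prop)
      (by apply Continuous.intervalIntegrable; fun_prop),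
      intervalIntegral.integral_comp_add_left (fun t => t ^ k)]
    rw [integral_pow, integral_pow]
    ring
  rw [← hint, ← integral_profile]
  exact intervalIntegral.integral_mono_on zero_le_one
    (by apply Continuous.intervalIntegrable; fun_prop)
    (by apply Continuous.intervalIntegrable; unfold profile; fun_prop) hpoint

end Family

section Counting

variable {α : Type*} [DecidableEq α]

theorem sum_inv_card_memberSubfamily (𝓖 : Finset (Finset α)) (x : α) :
    ∑ G ∈ 𝓖.memberSubfamily x, ((#G : ℝ) + 1)⁻¹ = ∑ F ∈ 𝓖 with x ∈ F, (#F : ℝ)⁻¹ := by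
  rw [← sum_memberSubfamily_insert]
  refine sum_congr rfl fun G hG => ?_
  rw [card_insert_of_notMem (mem_memberSubfamily.mp hG).2, Nat.cast_succ]

theorem sum_sum_inv_card_eq_card_filter_nonempty {V : Finset α} {𝓖 : Finset (Finset α)}
    (h𝓖 : 𝓖 ⊆ V.powerset) :
    ∑ x ∈ V, ∑ F ∈ 𝓖 with x ∈ F, (#F : ℝ)⁻¹ = #{F ∈ 𝓖 | F.Nonempty} := by
  rw [sum_comm' (t' := 𝓖) (s' := id), natCast_card_filter]
  · refine sum_congr rfl fun F _ => ?_
    rw [id, sum_const, nsmul_eq_mul]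
    split_ifs with hF
    · exact mul_inv_cancel₀ (Nat.cast_ne_zero.mpr hF.card_ne_zero)
    · simp [not_nonempty_iff_eq_empty.mp hF]
  · intro x F
    simp only [mem_filter, id]
    exact ⟨fun ⟨_, hF, hxF⟩ => ⟨hxF, hF⟩,
      fun ⟨hxF, hF⟩ => ⟨mem_powerset.mp (h𝓖 hF) hxF, hF, hxF⟩⟩

theorem card_mul_le_card_filter_nonempty {k : ℕ} {V : Finset α} {𝓖 : Finset (Finset α)}
    (h𝓖V : 𝓖 ⊆ V.powerset) (h𝓖 : IsLowerSet (𝓖 : Set (Finset α)))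
    (hdeg : ∀ x ∈ V, 2 ^ k ≤ #(𝓖.memberSubfamily x) + 1) :
    (#V : ℝ) * (2 ^ (k + 1) - 2) ≤ (k + 1) * #{F ∈ 𝓖 | F.Nonempty} := by
  calc (#V : ℝ) * (2 ^ (k + 1) - 2) = (k + 1) * ∑ _x ∈ V, ((2 : ℝ) ^ (k + 1) - 2) / (k + 1) := by
        rw [sum_const, nsmul_eq_mul]; field_simp
    _ ≤ (k + 1) * ∑ x ∈ V, ∑ F ∈ 𝓖 with x ∈ F, (#F : ℝ)⁻¹ := by
        gcongr with x hx
        exact sum_inv_card_memberSubfamily 𝓖 x ▸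
          div_le_sum_inv_card_add_one h𝓖.memberSubfamily (hdeg x hx)
    _ = (k + 1) * #{F ∈ 𝓖 | F.Nonempty} := by
        rw [sum_sum_inv_card_eq_card_filter_nonempty h𝓖V]

theorem IsLowerSet.card_filter_nonempty_add_one {𝓖 : Finset (Finset α)}
    (h𝓖 : IsLowerSet (𝓖 : Set (Finset α))) (hne : 𝓖.Nonempty) :
    #{F ∈ 𝓖 | F.Nonempty} + 1 = #𝓖 := by
  obtain ⟨F, hF⟩ := hne
  rw [← card_erase_add_one (h𝓖 (empty_subset F) hF), ← filter_ne']
  simp only [nonempty_iff_ne_empty]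

theorem IsLowerSet.traceAt_eq_nonMemberSubfamily {𝓖 : Finset (Finset α)}
    (h𝓖 : IsLowerSet (𝓖 : Set (Finset α))) (x : α) :
    traceAt 𝓖 x = 𝓖.nonMemberSubfamily x := by
  rw [traceAt, ← memberSubfamily_union_nonMemberSubfamily,
    union_eq_right.mpr h𝓖.memberSubfamily_subset_nonMemberSubfamily]

end Counting

section Compression

variable {α : Type*} [DecidableEq α]

open FinsetFamily

theorem isLowerSet_of_forall_erase_mem {𝓕 : Finset (Finset α)}
    (h : ∀ F ∈ 𝓕, ∀ x, F.erase x ∈ 𝓕) : IsLowerSet (𝓕 : Set (Finset α)) := by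
  intro F G hGF hF
  induction F using Finset.strongInduction with
  | _ F ih =>
  obtain rfl | hne := eq_or_ne G F
  · exact hF
  obtain ⟨x, hxF, hxG⟩ := exists_of_ssubset (lt_of_le_of_ne hGF hne)
  exact ih _ (erase_ssubset hxF) (subset_erase.mpr ⟨hGF, hxG⟩) (h F hF x)

theorem traceAt_compression_subset {x y : α} (hxy : x ≠ y) (𝓕 : Finset (Finset α)) :
    traceAt (𝓓 x 𝓕) y ⊆ 𝓓 x (traceAt 𝓕 y) := by
  simp only [traceAt, subset_iff, mem_image, Down.mem_compression]
  rintro _ ⟨K, ⟨hK, hKx⟩ | ⟨hKn, hK⟩, rfl⟩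
  · exact Or.inl ⟨⟨K, hK, rfl⟩, ⟨K.erase x, hKx, erase_right_comm⟩⟩
  have hxK : x ∉ K.erase y := fun h => hKn (insert_eq_of_mem (mem_of_mem_erase h) ▸ hK)
  by_cases hs : ∃ F ∈ 𝓕, F.erase y = K.erase y
  · exact Or.inl ⟨hs, by rwa [erase_eq_of_notMem hxK]⟩
  · exact Or.inr ⟨hs, ⟨insert x K, hK, erase_insert_of_ne hxy⟩⟩

theorem card_traceAt_compression_le (x y : α) (𝓕 : Finset (Finset α)) :
    #(traceAt (𝓓 x 𝓕) y) ≤ #(traceAt 𝓕 y) := by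
  rcases eq_or_ne x y with rfl | hxy
  · refine card_le_card fun s hs => ?_
    simp only [traceAt, mem_image, Down.mem_compression] at hs ⊢
    obtain ⟨K, ⟨hK, -⟩ | ⟨-, hK⟩, rfl⟩ := hs
    · exact ⟨K, hK, rfl⟩
    · exact ⟨insert x K, hK, erase_insert_eq_erase _ _⟩
  · exact (card_le_card (traceAt_compression_subset hxy 𝓕)).trans_eq (Down.card_compression x _)

theorem sum_card_compression_lt {𝓕 : Finset (Finset α)} {F : Finset α} {x : α} (hF : F ∈ 𝓕)
    (hFx : F.erase x ∉ 𝓕) : ∑ K ∈ 𝓓 x 𝓕, #K < ∑ K ∈ 𝓕, #K := by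
  have hxF : x ∈ F := by_contra fun h => hFx (by rwa [erase_eq_of_notMem h])
  rw [Down.compression, sum_disjUnion, ← sum_filter_add_sum_filter_not 𝓕 (·.erase x ∈ 𝓕),
    filter_image]
  refine add_lt_add_of_le_of_lt le_rfl ((sum_image_le_of_nonneg fun _ _ => Nat.zero_le _).trans_lt
    (sum_lt_sum (fun K _ => card_le_card (erase_subset _ _)) ⟨F, mem_filter.mpr ⟨hF, hFx⟩, ?_⟩))
  exact card_erase_lt_of_mem hxF

theorem compression_subset_powerset {V : Finset α} {𝓕 : Finset (Finset α)}
    (h𝓕 : 𝓕 ⊆ V.powerset) (x : α) : 𝓓 x 𝓕 ⊆ V.powerset := by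
  intro s hs
  rcases Down.mem_compression.mp hs with ⟨hs, -⟩ | ⟨-, hs⟩
  · exact h𝓕 hs
  · exact mem_powerset.mpr ((subset_insert x s).trans (mem_powerset.mp (h𝓕 hs)))

theorem exists_isLowerSet_card_eq_card_traceAt_le (V : Finset α) (𝓕 : Finset (Finset α))
    (h𝓕 : 𝓕 ⊆ V.powerset) :
    ∃ 𝓖 ⊆ V.powerset, IsLowerSet (𝓖 : Set (Finset α)) ∧ #𝓖 = #𝓕 ∧
      ∀ y, #(traceAt 𝓖 y) ≤ #(traceAt 𝓕 y) := by
  induction hsum : ∑ K ∈ 𝓕, #K using Nat.strong_induction_on generalizing 𝓕 with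
  | _ N ih =>
  by_cases hlow : ∀ F ∈ 𝓕, ∀ x, F.erase x ∈ 𝓕
  · exact ⟨𝓕, h𝓕, isLowerSet_of_forall_erase_mem hlow, rfl, fun _ => le_rfl⟩
  push Not at hlow
  obtain ⟨F, hF, x, hFx⟩ := hlow
  obtain ⟨𝓖, h𝓖V, h𝓖, hcard, htrace⟩ := ih _ (hsum ▸ sum_card_compression_lt hF hFx) (𝓓 x 𝓕)
    (compression_subset_powerset h𝓕 x) rfl
  exact ⟨𝓖, h𝓖V, h𝓖, hcard.trans (Down.card_compression x 𝓕),
    fun y => (htrace y).trans (card_traceAt_compression_le x y 𝓕)⟩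

end Compression

/-- Lower-bound (arrowing) direction: if `d ≥ 2`, `n ≥ 1` and a family `𝓕` of subsets
of an `n`-set `V` has `d·|𝓕| ≤ n·(2^d − 2)`, then some vertex `x ∈ V` satisfies
`|𝓕_x| ≥ |𝓕| − (2^{d−1} − 2)`. -/
theorem trace_lower_c2 {α : Type*} [DecidableEq α] (d n : ℕ)
    (hd : 2 ≤ d) (hn : 1 ≤ n)
    (V : Finset α) (hV : V.card = n)
    (𝓕 : Finset (Finset α)) (h𝓕 : 𝓕 ⊆ V.powerset)
    (hcount : (d : ℤ) * 𝓕.card ≤ (n : ℤ) * (2 ^ d - 2)) :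
    ∃ x ∈ V, (𝓕.card : ℤ) - (2 ^ (d - 1) - 2) ≤ ((traceAt 𝓕 x).card : ℤ) := by
  by_contra! hsmall
  obtain ⟨k, rfl⟩ : ∃ k, d = k + 1 := ⟨d - 1, by omega⟩
  simp only [add_tsub_cancel_right] at hsmall
  have hk : (2 : ℤ) ≤ 2 ^ k := le_self_pow₀ one_le_two (by omega)
  obtain ⟨𝓖, h𝓖V, h𝓖, hcard, htrace⟩ := exists_isLowerSet_card_eq_card_traceAt_le V 𝓕 h𝓕
  have hdeg : ∀ x ∈ V, 2 ^ k ≤ #(𝓖.memberSubfamily x) + 1 := fun x hx => by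
    have hsplit := card_memberSubfamily_add_card_nonMemberSubfamily x 𝓖
    rw [← h𝓖.traceAt_eq_nonMemberSubfamily] at hsplit
    have := hsmall x hx
    have := htrace x
    zify at *
    linarith
  obtain ⟨x, hx⟩ := card_pos.mp (hV ▸ hn : 0 < #V)
  have hne : 𝓖.Nonempty := card_pos.mp (by have := hsmall x hx; zify; linarith)
  have hbound := card_mul_le_card_filter_nonempty h𝓖V h𝓖 hdeg
  have hcount' : ((k + 1 : ℕ) : ℝ) * #𝓕 ≤ n * (2 ^ (k + 1) - 2) := by exact_mod_cast hcount
  rw [← hcard, ← h𝓖.card_filter_nonempty_add_one hne] at hcount'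
  push_cast at hcount'
  rw [hV] at hbound
  linarith
end

section
/- For all natural numbers n, m, a, b the following two statements are equivalent: (1) for every finite set V with |V| = n and every hereditary family 𝓕 of subsets of V with |𝓕| ≥ m, there exists a set T ⊆ V with |T| = a such that |𝓕|_T| ≥ b; (2) for every finite set V with |V| = n and every family 𝓕 of subsets of V with |𝓕| ≥ m, there exists a set T ⊆ V with |T| = a such that |𝓕|_T| ≥ b. -/
/-- A family of finite sets is hereditary if it is closed under taking subsets. -/
def Hereditary {α : Type*} [DecidableEq α] (𝓕 : Finset (Finset α)) : Prop :=
  ∀ F ∈ 𝓕, ∀ F' ⊆ F, F' ∈ 𝓕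

/-- The trace of a family `𝓕` on a set `T`: the family `{F ∩ T : F ∈ 𝓕}`. -/
def traceOn {α : Type*} [DecidableEq α] (𝓕 : Finset (Finset α)) (T : Finset α) :
    Finset (Finset α) :=
  𝓕.image fun F => F ∩ T

/-!
Down-compression `𝓓 a` replaces each member `s ∋ a` of a family by `s.erase a` unless that set
is already present. It preserves the size of the family and never enlarges a trace: on a set
`T ∋ a` the trace of `𝓓 a 𝒜` lies in the compression of the trace of `𝒜`, and on `T ∌ a` it lies
in the trace of `𝒜` itself. Unless the family is already closed under erasing elements, some
compression strictly decreases the total size `∑ s ∈ 𝒜, #s`, so iterating compressions turns any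
family on `V` into a hereditary one of the same size with no larger traces. Hence arrowing for
hereditary families implies arrowing for all families; the converse is trivial.
-/

open Finset FinsetFamily

variable {α : Type*} [DecidableEq α] {𝒜 : Finset (Finset α)} {a : α} {s : Finset α}

lemma hereditary_of_forall_erase_mem (h : ∀ s ∈ 𝒜, ∀ a, s.erase a ∈ 𝒜) : Hereditary 𝒜 := by
  have sdiff_mem : ∀ u : Finset α, ∀ s ∈ 𝒜, s \ u ∈ 𝒜 := by
    intro u
    induction u using Finset.induction_on with
    | empty => simp
    | insert x u _ ih => exact fun s hs ↦ sdiff_insert s u x ▸ h _ (ih s hs) x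
  intro s hs t hts
  rw [← Finset.sdiff_sdiff_eq_self hts]
  exact sdiff_mem _ s hs

lemma mem_of_mem_of_erase_notMem (hs : s ∈ 𝒜) (ha : s.erase a ∉ 𝒜) : a ∈ s := by
  by_contra has
  exact ha (by rwa [erase_eq_of_notMem has])

namespace Down

lemma sum_compression {M : Type*} [AddCommMonoid M] (a : α) (𝒜 : Finset (Finset α))
    (f : Finset α → M) :
    ∑ s ∈ 𝓓 a 𝒜, f s =
      ∑ s ∈ 𝒜 with s.erase a ∈ 𝒜, f s + ∑ s ∈ 𝒜 with s.erase a ∉ 𝒜, f (s.erase a) := by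
  rw [compression, sum_disjUnion, filter_image, sum_image]
  intro s hs t ht
  rw [mem_coe, mem_filter] at hs ht
  exact erase_injOn' a (mem_of_mem_of_erase_notMem hs.1 hs.2)
    (mem_of_mem_of_erase_notMem ht.1 ht.2)

lemma sum_card_compression_lt (hs : s ∈ 𝒜) (ha : s.erase a ∉ 𝒜) :
    ∑ t ∈ 𝓓 a 𝒜, #t < ∑ t ∈ 𝒜, #t := by
  rw [sum_compression, ← sum_filter_add_sum_filter_not 𝒜 (fun t ↦ t.erase a ∈ 𝒜)]
  refine Nat.add_lt_add_left (sum_lt_sum_of_nonempty ⟨s, mem_filter.2 ⟨hs, ha⟩⟩ ?_) _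
  intro t ht
  rw [mem_filter] at ht
  exact card_erase_lt_of_mem (mem_of_mem_of_erase_notMem ht.1 ht.2)

lemma exists_superset_of_mem_compression (hs : s ∈ 𝓓 a 𝒜) : ∃ t ∈ 𝒜, s ⊆ t := by
  rcases mem_compression.1 hs with ⟨hs, -⟩ | ⟨-, hs⟩
  exacts [⟨s, hs, subset_rfl⟩, ⟨_, hs, subset_insert a s⟩]

end Down

@[simp]
lemma mem_traceOn {T s : Finset α} : s ∈ traceOn 𝒜 T ↔ ∃ t ∈ 𝒜, t ∩ T = s := by
  simp [traceOn]

lemma traceOn_compression_subset_of_notMem {T : Finset α} (haT : a ∉ T) :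
    traceOn (𝓓 a 𝒜) T ⊆ traceOn 𝒜 T := by
  simp only [subset_iff, mem_traceOn, forall_exists_index, and_imp]
  rintro _ s hs rfl
  rcases Down.mem_compression.1 hs with ⟨hs, -⟩ | ⟨-, hs⟩
  exacts [⟨s, hs, rfl⟩, ⟨_, hs, insert_inter_of_notMem haT⟩]

lemma traceOn_compression_subset_compression_traceOn {T : Finset α} (haT : a ∈ T) :
    traceOn (𝓓 a 𝒜) T ⊆ 𝓓 a (traceOn 𝒜 T) := by
  simp only [subset_iff, mem_traceOn, forall_exists_index, and_imp]
  rintro _ s hs rfl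
  rcases Down.mem_compression.1 hs with ⟨hs, hsa⟩ | ⟨hs, hsa⟩
  · refine Down.mem_compression.2 (Or.inl ⟨mem_traceOn.2 ⟨s, hs, rfl⟩, ?_⟩)
    exact mem_traceOn.2 ⟨_, hsa, erase_inter a s T⟩
  · have ha : a ∉ s := fun ha ↦ hs (by rwa [insert_eq_of_mem ha] at hsa)
    have := Down.erase_mem_compression (a := a)
      (mem_traceOn.2 ⟨_, hsa, rfl⟩ : insert a s ∩ T ∈ traceOn 𝒜 T)
    rwa [insert_inter_of_mem haT, erase_insert (fun h ↦ ha (mem_inter.1 h).1)] at this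

lemma card_traceOn_compression_le (a : α) (𝒜 : Finset (Finset α)) (T : Finset α) :
    #(traceOn (𝓓 a 𝒜) T) ≤ #(traceOn 𝒜 T) := by
  by_cases haT : a ∈ T
  · calc #(traceOn (𝓓 a 𝒜) T) ≤ #(𝓓 a (traceOn 𝒜 T)) :=
          card_le_card (traceOn_compression_subset_compression_traceOn haT)
      _ = #(traceOn 𝒜 T) := Down.card_compression a _
  · exact card_le_card (traceOn_compression_subset_of_notMem haT)

lemma exists_hereditary_card_eq_card_traceOn_le {V : Finset α} (h𝒜 : 𝒜 ⊆ V.powerset) :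
    ∃ ℬ ⊆ V.powerset, Hereditary ℬ ∧ #ℬ = #𝒜 ∧ ∀ T, #(traceOn ℬ T) ≤ #(traceOn 𝒜 T) := by
  induction hN : ∑ s ∈ 𝒜, #s using Nat.strong_induction_on generalizing 𝒜 with
  | _ N ih =>
    by_cases h : ∀ s ∈ 𝒜, ∀ a, s.erase a ∈ 𝒜
    · exact ⟨𝒜, h𝒜, hereditary_of_forall_erase_mem h, rfl, fun _ ↦ le_rfl⟩
    push Not at h
    obtain ⟨s, hs, a, hsa⟩ := h
    have hV : 𝓓 a 𝒜 ⊆ V.powerset := fun t ht ↦ by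
      obtain ⟨u, hu, htu⟩ := Down.exists_superset_of_mem_compression ht
      exact mem_powerset.2 (htu.trans (mem_powerset.1 (h𝒜 hu)))
    obtain ⟨ℬ, hℬV, hℬ, hcard, htrace⟩ :=
      ih _ (hN ▸ Down.sum_card_compression_lt hs hsa) hV rfl
    exact ⟨ℬ, hℬV, hℬ, hcard.trans (Down.card_compression a 𝒜),
      fun T ↦ (htrace T).trans (card_traceOn_compression_le a 𝒜 T)⟩

/-- Frankl's reduction lemma: the arrowing relation `(n,m) → (a,b)` holds for all families
if and only if it holds for all hereditary families. -/
theorem hereditary_reduction (n m a b : ℕ) :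
    (∀ V : Finset ℕ, V.card = n →
      ∀ 𝓕 : Finset (Finset ℕ), 𝓕 ⊆ V.powerset → Hereditary 𝓕 → m ≤ 𝓕.card →
        ∃ T ⊆ V, T.card = a ∧ b ≤ (traceOn 𝓕 T).card) ↔
    (∀ V : Finset ℕ, V.card = n →
      ∀ 𝓕 : Finset (Finset ℕ), 𝓕 ⊆ V.powerset → m ≤ 𝓕.card →
        ∃ T ⊆ V, T.card = a ∧ b ≤ (traceOn 𝓕 T).card) := by
  refine ⟨fun H V hV 𝓕 h𝓕V hm ↦ ?_, fun H V hV 𝓕 h𝓕V _ hm ↦ H V hV 𝓕 h𝓕V hm⟩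
  obtain ⟨𝓖, h𝓖V, h𝓖, hcard, htrace⟩ := exists_hereditary_card_eq_card_traceOn_le h𝓕V
  obtain ⟨T, hTV, hTa, hTb⟩ := H V hV 𝓖 h𝓖V h𝓖 (hcard ▸ hm)
  exact ⟨T, hTV, hTa, hTb.trans (htrace T)⟩
end

section
/- Let d ≥ 4 and c ≤ 2^d be natural numbers, let V be a finite set, and let 𝓗 be a hereditary family of subsets of V with |𝓗| ≥ 2^d − c. If at least d + 1 vertices of V are non-isolated in 𝓗 (i.e. each lies in some member of 𝓗), then Σ_{H ∈ 𝓗} 1/(|H| + 1) ≥ W(2^d − c) + 1/6. -/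
/-- `colexInit m` is the family of the first `m` finite subsets of `ℕ` in colexicographic
order; a finite set `A ⊆ ℕ` has colexicographic rank `∑ i ∈ A, 2 ^ i`. -/
def colexInit (m : ℕ) : Finset (Finset ℕ) :=
  (Finset.range m).powerset.filter fun A => ∑ i ∈ A, 2 ^ i < m

/-- `W m = ∑_{R ∈ R(m)} 1/(|R| + 1)`. -/
noncomputable def W (m : ℕ) : ℝ :=
  ∑ R ∈ colexInit m, (1 : ℝ) / (R.card + 1)

/-!
Identify the `j`-th finite set in colex order with the set of binary digits of `j`, so that
`W m = S_g m := ∑_{j < m} g (popcount j)` for `g s = 1 / (s + 1)`. Splitting the range at the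
parities of `j` gives `S_g (a + b) ≤ S_g a + S_{g (· + 1)} b` for `b ≤ a` and antitone `g`.
Splitting a hereditary family at a vertex `v` into the members avoiding `v` and the links of `v`
then shows, by induction, that colex initial segments minimise `∑_{H ∈ 𝓗} g |H|` for their size.

If `𝓗` has `n` non-isolated vertices and at most `2 ^ (n - 1)` members, the same splitting
gains `g 1 - g 2 = 1/6`: either the members avoiding `v` are again at most `2 ^ (n - 2)` many
(induct), or they overshoot `2 ^ (n - 2)`, and then the links of `v` are compared with a colex
segment starting strictly inside a dyadic block, which costs at least `g 1 - g 2`. If `𝓗` has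
more than `2 ^ (n - 1) ≥ 2 ^ d` members, it beats `W (2 ^ d) + g 1` outright.
-/

open Finset

def popcount (n : ℕ) : ℕ := n.bitIndices.length

@[simp] lemma popcount_zero : popcount 0 = 0 := by simp [popcount]

@[simp] lemma popcount_two_mul (n : ℕ) : popcount (2 * n) = popcount n := by simp [popcount]

@[simp] lemma popcount_two_mul_add_one (n : ℕ) : popcount (2 * n + 1) = popcount n + 1 := by
  simp [popcount]

lemma popcount_two_pow_add {k i : ℕ} (hi : i < 2 ^ k) :
    popcount (2 ^ k + i) = popcount i + 1 := by
  induction k generalizing i with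
  | zero =>
    obtain rfl : i = 0 := by omega
    simp [popcount]
  | succ k ih =>
    obtain ⟨j, rfl | rfl⟩ := Nat.even_or_odd' i
    · rw [pow_succ', ← mul_add, popcount_two_mul, popcount_two_mul, ih (by omega)]
    · rw [pow_succ', ← add_assoc, ← mul_add, popcount_two_mul_add_one,
        popcount_two_mul_add_one, ih (by omega)]

lemma card_toFinset_bitIndices (n : ℕ) : #n.bitIndices.toFinset = popcount n :=
  List.toFinset_card_of_nodup Nat.bitIndices_nodup

/-- `colexSum g m = ∑_{R ∈ R(m)} g |R|`. -/
noncomputable def colexSum (g : ℕ → ℝ) (m : ℕ) : ℝ := ∑ j ∈ range m, g (popcount j)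

section colexSum

variable {g : ℕ → ℝ}

lemma Antitone.comp_add_one (hg : Antitone g) : Antitone fun s => g (s + 1) :=
  fun _ _ h => hg (Nat.succ_le_succ h)

@[simp] lemma colexSum_zero (g : ℕ → ℝ) : colexSum g 0 = 0 := by simp [colexSum]

lemma colexSum_succ (g : ℕ → ℝ) (m : ℕ) : colexSum g (m + 1) = colexSum g m + g (popcount m) :=
  sum_range_succ _ _

lemma colexSum_mono (hg : 0 ≤ g) : Monotone (colexSum g) :=
  fun _ _ h => sum_le_sum_of_subset_of_nonneg (range_subset_range.2 h) fun _ _ _ => hg _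

lemma colexSum_eq_even_add_odd (g : ℕ → ℝ) (m : ℕ) :
    colexSum g m = colexSum g ((m + 1) / 2) + colexSum (fun s => g (s + 1)) (m / 2) := by
  induction m with
  | zero => simp
  | succ m ih =>
    rw [colexSum_succ, ih]
    obtain ⟨i, rfl | rfl⟩ := Nat.even_or_odd' m
    · rw [show (2 * i + 1 + 1) / 2 = i + 1 by omega, show (2 * i + 1) / 2 = i by omega,
        show 2 * i / 2 = i by omega, colexSum_succ, popcount_two_mul]
      ring
    · rw [show (2 * i + 1 + 1 + 1) / 2 = i + 1 by omega,
        show (2 * i + 1 + 1) / 2 = i + 1 by omega, show (2 * i + 1) / 2 = i by omega,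
        colexSum_succ (fun s => g (s + 1)), popcount_two_mul_add_one]
      ring

lemma colexSum_two_pow_add (g : ℕ → ℝ) {k m : ℕ} (hm : m ≤ 2 ^ k) :
    colexSum g (2 ^ k + m) = colexSum g (2 ^ k) + colexSum (fun s => g (s + 1)) m := by
  unfold colexSum
  rw [sum_range_add]
  congr 1
  refine sum_congr rfl fun i hi => ?_
  rw [popcount_two_pow_add (by simp at hi; omega)]

lemma colexSum_shift_add_le (hg : Antitone g) {m : ℕ} (hm : m ≠ 0) :
    colexSum (fun s => g (s + 1)) m + (g 0 - g 1) ≤ colexSum g m := by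
  obtain ⟨m, rfl⟩ := Nat.exists_eq_succ_of_ne_zero hm
  simp only [colexSum, sum_range_succ', popcount_zero]
  have := sum_le_sum fun j (_ : j ∈ range m) => hg (Nat.le_succ (popcount (j + 1)))
  linarith

lemma colexSum_add_le (hg : Antitone g) {a b : ℕ} (hba : b ≤ a) :
    colexSum g (a + b) ≤ colexSum g a + colexSum (fun s => g (s + 1)) b := by
  induction a using Nat.strong_induction_on generalizing g b with
  | _ a ih =>
  obtain rfl | hb := Nat.eq_zero_or_pos b
  · simp
  obtain rfl | hba := hba.eq_or_lt
  · rw [← two_mul, colexSum_eq_even_add_odd g (2 * b), show (2 * b + 1) / 2 = b by omega,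
      show 2 * b / 2 = b by omega]
  rw [colexSum_eq_even_add_odd g (a + b), colexSum_eq_even_add_odd g a,
    colexSum_eq_even_add_odd (fun s => g (s + 1)) b]
  by_cases hodd : a % 2 = 1 ∧ b % 2 = 1
  · -- the halves of `b` are split the other way round; `g (· + 2) ≤ g (· + 1)` pays for the swap
    rw [show (a + b + 1) / 2 = (a + 1) / 2 + b / 2 by omega,
      show (a + b) / 2 = a / 2 + (b / 2 + 1) by omega, show (b + 1) / 2 = b / 2 + 1 by omega]
    have h₁ := ih ((a + 1) / 2) (by omega) hg (b := b / 2) (by omega)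
    have h₂ := ih (a / 2) (by omega) hg.comp_add_one (b := b / 2 + 1) (by omega)
    simp only [colexSum_succ] at h₂ ⊢
    linarith [hg (Nat.le_succ (popcount (b / 2) + 1))]
  · rw [show (a + b + 1) / 2 = (a + 1) / 2 + (b + 1) / 2 by omega,
      show (a + b) / 2 = a / 2 + b / 2 by omega]
    linarith [ih ((a + 1) / 2) (by omega) hg (b := (b + 1) / 2) (by omega),
      ih (a / 2) (by omega) hg.comp_add_one (b := b / 2) (by omega)]

lemma colexSum_add_add_le (hg : Antitone g) {a b : ℕ} (ha : a ≠ 0) (hb : b ≠ 0) :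
    colexSum g (a + b) + (g 0 - g 1) ≤ colexSum g a + colexSum g b := by
  wlog hba : b ≤ a generalizing a b
  · rw [add_comm a b, add_comm (colexSum g a)]
    exact this hb ha (by omega)
  linarith [colexSum_add_le hg hba, colexSum_shift_add_le hg hb]

end colexSum

section Family

variable {α : Type*} [DecidableEq α] {g : ℕ → ℝ}

lemma Hereditary.isLowerSet {𝒜 : Finset (Finset α)} (h : Hereditary 𝒜) :
    IsLowerSet (𝒜 : Set (Finset α)) :=
  fun _ _ hts hs => h _ hs _ hts

lemma sum_card_eq_sum_nonMemberSubfamily_add_sum_memberSubfamily (g : ℕ → ℝ) (a : α)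
    (𝒜 : Finset (Finset α)) :
    ∑ t ∈ 𝒜, g #t = ∑ t ∈ 𝒜.nonMemberSubfamily a, g #t
      + ∑ t ∈ 𝒜.memberSubfamily a, g (#t + 1) := by
  rw [← sum_filter_not_add_sum_filter 𝒜 (a ∈ ·), ← image_insert_memberSubfamily,
    sum_image fun s hs t ht h => by
      rw [← erase_insert (mem_memberSubfamily.1 hs).2, h,
        erase_insert (mem_memberSubfamily.1 ht).2]]
  congr 1
  refine sum_congr rfl fun t ht => ?_
  rw [card_insert_of_notMem (mem_memberSubfamily.1 ht).2]

lemma colexSum_card_le_sum_card (hg : Antitone g) {𝒜 : Finset (Finset α)}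
    (h𝒜 : IsLowerSet (𝒜 : Set (Finset α))) :
    colexSum g #𝒜 ≤ ∑ t ∈ 𝒜, g #t := by
  induction 𝒜 using Finset.memberFamily_induction_on generalizing g with
  | empty => simp
  | singleton_empty => simp [colexSum]
  | subfamily a ih₀ ih₁ =>
    rw [← card_memberSubfamily_add_card_nonMemberSubfamily a, add_comm,
      sum_card_eq_sum_nonMemberSubfamily_add_sum_memberSubfamily g a]
    exact (colexSum_add_le hg (card_le_card h𝒜.memberSubfamily_subset_nonMemberSubfamily)).trans
      (add_le_add (ih₀ hg h𝒜.nonMemberSubfamily) (ih₁ hg.comp_add_one h𝒜.memberSubfamily))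

lemma colexSum_card_add_le_sum_card (hg : Antitone g) {𝒜 : Finset (Finset α)}
    (h𝒜 : IsLowerSet (𝒜 : Set (Finset α))) {s : Finset α} (hs : ∀ a ∈ s, {a} ∈ 𝒜)
    (hs₀ : s.Nonempty) (hcard : #𝒜 ≤ 2 ^ (#s - 1)) :
    colexSum g #𝒜 + (g 1 - g 2) ≤ ∑ t ∈ 𝒜, g #t := by
  induction s using Finset.strongInduction generalizing 𝒜 with
  | H s ih =>
  obtain ⟨v, hv⟩ := hs₀
  set 𝒜₀ := 𝒜.nonMemberSubfamily v
  set 𝒜₁ := 𝒜.memberSubfamily v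
  have hsplit : #𝒜 = #𝒜₀ + #𝒜₁ := by
    rw [← card_memberSubfamily_add_card_nonMemberSubfamily v, add_comm]
  have h₁₀ : #𝒜₁ ≤ #𝒜₀ := card_le_card h𝒜.memberSubfamily_subset_nonMemberSubfamily
  have h₁ : 0 < #𝒜₁ :=
    card_pos.2 ⟨∅, mem_memberSubfamily.2 ⟨by simpa using hs v hv, notMem_empty v⟩⟩
  have hs₂ : 2 ≤ #s := by
    by_contra! h
    rw [show #s - 1 = 0 by omega] at hcard
    omega
  have hw₀ := colexSum_card_le_sum_card hg (h𝒜.nonMemberSubfamily (a := v))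
  have hw₁ := colexSum_card_le_sum_card hg.comp_add_one (h𝒜.memberSubfamily (a := v))
  rw [sum_card_eq_sum_nonMemberSubfamily_add_sum_memberSubfamily g v, hsplit]
  by_cases hsmall : #𝒜₀ ≤ 2 ^ (#s - 2)
  · have hs' : ∀ a ∈ s.erase v, {a} ∈ 𝒜₀ := fun a ha => mem_nonMemberSubfamily.2
      ⟨hs a (mem_of_mem_erase ha), by simpa using (ne_of_mem_erase ha).symm⟩
    have ih₀ := ih (s.erase v) (erase_ssubset hv) h𝒜.nonMemberSubfamily hs'
      (card_pos.1 (by rw [card_erase_of_mem hv]; omega))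
      (by rwa [card_erase_of_mem hv, Nat.sub_sub])
    linarith [colexSum_add_le hg h₁₀]
  · -- the members avoiding `v` fill the first dyadic block of size `K` and reach `r` into the next
    set K := 2 ^ (#s - 2)
    have hK : 2 ^ (#s - 1) = K + K := by
      rw [← two_mul, ← pow_succ']
      congr 1
      omega
    obtain ⟨r, hr⟩ : ∃ r, #𝒜₀ = K + r := ⟨#𝒜₀ - K, by omega⟩
    have hr₀ : r ≠ 0 := by omega
    have hsum := colexSum_two_pow_add g (k := #s - 2) (m := r + #𝒜₁) (by omega)
    have hsum₀ := colexSum_two_pow_add g (k := #s - 2) (m := r) (by omega)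
    have hgain := colexSum_add_add_le hg.comp_add_one hr₀ h₁.ne'
    rw [hr, add_assoc, hsum]
    rw [hr, hsum₀] at hw₀
    linarith

end Family

lemma colexInit_eq_map (m : ℕ) : colexInit m = (range m).map equivBitIndices.toEmbedding := by
  ext A
  simp only [colexInit, mem_filter, mem_powerset, mem_map_equiv, equivBitIndices_symm_apply,
    mem_range, and_iff_right_iff_imp]
  exact fun hA i hi => mem_range.2 ((lt_geomSum_of_mem le_rfl hi).trans hA)

lemma W_eq_colexSum (m : ℕ) : W m = colexSum (fun s => 1 / (s + 1)) m := by
  simp [W, colexSum, colexInit_eq_map, card_toFinset_bitIndices]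

theorem weight_lemma_many_vertices_general {α : Type*} [DecidableEq α] (d c : ℕ)
    (V : Finset α)
    (𝓗 : Finset (Finset α)) (hher : Hereditary 𝓗)
    (hcard : 2 ^ d - c ≤ 𝓗.card)
    (hvert : d + 1 ≤ (V.filter fun v => ∃ H ∈ 𝓗, v ∈ H).card) :
    W (2 ^ d - c) + 1 / 6 ≤ ∑ H ∈ 𝓗, (1 : ℝ) / (H.card + 1) := by
  rw [W_eq_colexSum]
  set g : ℕ → ℝ := fun s => 1 / (s + 1)
  change colexSum g (2 ^ d - c) + 1 / 6 ≤ ∑ H ∈ 𝓗, g #H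
  have hg : Antitone g := fun a b h => by
    dsimp only [g]
    gcongr
  have hg₀ : 0 ≤ g := fun s => by positivity
  set s := V.filter fun v => ∃ H ∈ 𝓗, v ∈ H
  have hs : ∀ a ∈ s, {a} ∈ 𝓗 := fun a ha => by
    obtain ⟨H, hH, haH⟩ := (mem_filter.1 ha).2
    exact hher H hH {a} (singleton_subset_iff.2 haH)
  by_cases hsmall : #𝓗 ≤ 2 ^ (#s - 1)
  · have hgain : g 1 - g 2 = 1 / 6 := by norm_num [g]
    have h := colexSum_card_add_le_sum_card hg hher.isLowerSet hs (card_pos.1 (by omega)) hsmall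
    rw [hgain] at h
    exact (add_le_add_left (colexSum_mono hg₀ hcard) _).trans h
  · have hbig : 2 ^ d + 1 ≤ #𝓗 :=
      (Nat.pow_le_pow_right two_pos (by omega)).trans_lt (not_le.1 hsmall)
    have hg₁ : colexSum (fun s => g (s + 1)) 1 = 1 / 2 := by norm_num [colexSum, g]
    calc colexSum g (2 ^ d - c) + 1 / 6
        ≤ colexSum g (2 ^ d) + colexSum (fun s => g (s + 1)) 1 := by
          linarith [colexSum_mono hg₀ (Nat.sub_le (2 ^ d) c)]
      _ = colexSum g (2 ^ d + 1) := (colexSum_two_pow_add g Nat.one_le_two_pow).symm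
      _ ≤ colexSum g #𝓗 := colexSum_mono hg₀ hbig
      _ ≤ ∑ H ∈ 𝓗, g #H := colexSum_card_le_sum_card hg hher.isLowerSet

/-- Lemma 3.1(2): if `d ≥ 4`, `c ≤ 2^d`, `𝓗` is a hereditary family with
`|𝓗| ≥ 2^d − c` and at least `d + 1` vertices are non-isolated in `𝓗`, then
`∑_{H ∈ 𝓗} 1/(|H| + 1) ≥ W(2^d − c) + 1/6`. -/
theorem weight_lemma_many_vertices {α : Type*} [DecidableEq α] (d c : ℕ)
    (hd : 4 ≤ d) (hc : c ≤ 2 ^ d) (V : Finset α)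
    (𝓗 : Finset (Finset α)) (h𝓗 : 𝓗 ⊆ V.powerset) (hher : Hereditary 𝓗)
    (hcard : 2 ^ d - c ≤ 𝓗.card)
    (hvert : d + 1 ≤ (V.filter fun v => ∃ H ∈ 𝓗, v ∈ H).card) :
    W (2 ^ d - c) + 1 / 6 ≤ ∑ H ∈ 𝓗, (1 : ℝ) / (H.card + 1) :=
  weight_lemma_many_vertices_general d c V 𝓗 hher hcard hvert
end

section
/- Let d, c be natural numbers with d ≥ c + 1, let V be a finite set with |V| = d, and let 𝓗 be a hereditary family of subsets of V such that every vertex v ∈ V has degree at least 2^{d−1} − c in 𝓗. Then |𝓗| ≥ 2^d − c. -/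
open Finset

namespace Finset

variable {α : Type*} [DecidableEq α] {V : Finset α}

theorem card_filter_mem_powerset {v : α} (hv : v ∈ V) :
    #(V.powerset.filter (v ∈ ·)) = 2 ^ (#V - 1) := by
  have himage : V.powerset.filter (v ∈ ·) = (V.erase v).powerset.image (insert v) := by
    ext A
    simp only [mem_filter, mem_powerset, mem_image, subset_erase]
    constructor
    · rintro ⟨hAV, hvA⟩
      exact ⟨A.erase v, ⟨(erase_subset v A).trans hAV, notMem_erase v A⟩, insert_erase hvA⟩
    · rintro ⟨B, ⟨hBV, -⟩, rfl⟩
      exact ⟨insert_subset hv hBV, mem_insert_self v B⟩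
  have hinj : Set.InjOn (insert v) ((V.erase v).powerset : Set (Finset α)) := by
    intro A hA B hB hAB
    simp only [coe_powerset, Set.mem_preimage, Set.mem_powerset_iff, coe_subset,
      subset_erase] at hA hB
    rw [← erase_insert hA.2, hAB, erase_insert hB.2]
  rw [himage, card_image_of_injOn hinj, card_powerset, card_erase_of_mem hv]

theorem card_le_card_filter_mem_of_upClosed {M : Finset (Finset α)} (hMV : M ⊆ V.powerset)
    (hup : ∀ A ∈ M, ∀ B ⊆ V, A ⊆ B → B ∈ M) (hmiss : ∀ v ∈ V, ∃ A ∈ M, v ∉ A)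
    {u : α} (hu : u ∈ V) :
    #V ≤ #(M.filter (u ∈ ·)) := by
  have herase_mem : ∀ v ∈ V, V.erase v ∈ M := fun v hv ↦ by
    obtain ⟨A, hAM, hvA⟩ := hmiss v hv
    exact hup A hAM _ (erase_subset v V) (subset_erase.2 ⟨mem_powerset.1 (hMV hAM), hvA⟩)
  have hsub : insert V ((V.erase u).image V.erase) ⊆ M.filter (u ∈ ·) := by
    intro B hB
    rcases mem_insert.1 hB with rfl | hB
    · exact mem_filter.2 ⟨hup _ (herase_mem u hu) B Subset.rfl (erase_subset u B), hu⟩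
    · obtain ⟨v, hv, rfl⟩ := mem_image.1 hB
      obtain ⟨hvu, hvV⟩ := mem_erase.1 hv
      exact mem_filter.2 ⟨herase_mem v hvV, mem_erase.2 ⟨Ne.symm hvu, hu⟩⟩
  have hVnot : V ∉ (V.erase u).image V.erase := by
    simp only [mem_image, not_exists, not_and]
    exact fun v hv h ↦ erase_eq_self.1 h (mem_of_mem_erase hv)
  calc #V = #(insert V ((V.erase u).image V.erase)) := by
        rw [card_insert_of_notMem hVnot, card_image_of_injOn
          ((erase_injOn V).mono (erase_subset u V)), card_erase_add_one hu]
    _ ≤ #(M.filter (u ∈ ·)) := card_le_card hsub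

theorem card_le_of_upClosed {M : Finset (Finset α)} {c : ℕ} (hMV : M ⊆ V.powerset)
    (hup : ∀ A ∈ M, ∀ B ⊆ V, A ⊆ B → B ∈ M) (hdeg : ∀ v ∈ V, #(M.filter (v ∈ ·)) ≤ c)
    (hc : c < #V) :
    #M ≤ c := by
  by_cases hcommon : ∃ u ∈ V, ∀ A ∈ M, u ∈ A
  · obtain ⟨u, hu, hall⟩ := hcommon
    rw [← filter_true_of_mem hall]
    exact hdeg u hu
  · push Not at hcommon
    obtain ⟨u, hu⟩ := card_pos.1 (c.zero_le.trans_lt hc)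
    have := card_le_card_filter_mem_of_upClosed hMV hup hcommon hu
    have := hdeg u hu
    omega

theorem card_filter_mem_powerset_sdiff_add {𝓗 : Finset (Finset α)} (h𝓗 : 𝓗 ⊆ V.powerset)
    {v : α} (hv : v ∈ V) :
    #((V.powerset \ 𝓗).filter (v ∈ ·)) + #(𝓗.filter (v ∈ ·)) = 2 ^ (#V - 1) := by
  have hsplit : (V.powerset \ 𝓗).filter (v ∈ ·) =
      V.powerset.filter (v ∈ ·) \ 𝓗.filter (v ∈ ·) := by
    ext A
    simp only [mem_filter, mem_sdiff]
    tauto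
  rw [hsplit, card_sdiff_add_card_eq_card (filter_subset_filter _ h𝓗),
    card_filter_mem_powerset hv]

end Finset

theorem Hereditary.upClosed_powerset_sdiff {α : Type*} [DecidableEq α] {𝓗 : Finset (Finset α)}
    (hher : Hereditary 𝓗) (V : Finset α) :
    ∀ A ∈ V.powerset \ 𝓗, ∀ B ⊆ V, A ⊆ B → B ∈ V.powerset \ 𝓗 := by
  intro A hA B hBV hAB
  rw [mem_sdiff] at hA ⊢
  exact ⟨mem_powerset.2 hBV, fun hB ↦ hA.2 (hher B hB A hAB)⟩

/-- Lemma 3.2(2): if `d ≥ c + 1` and `𝓗` is a hereditary family on a `d`-set `V` with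
minimum degree at least `2^{d−1} − c`, then `|𝓗| ≥ 2^d − c`. -/
theorem local_lemma_min_degree {α : Type*} [DecidableEq α] (d c : ℕ)
    (hdc : c + 1 ≤ d) (V : Finset α) (hV : V.card = d)
    (𝓗 : Finset (Finset α)) (h𝓗 : 𝓗 ⊆ V.powerset) (hher : Hereditary 𝓗)
    (hdeg : ∀ v ∈ V, (2 : ℤ) ^ (d - 1) - c ≤ ((𝓗.filter fun H => v ∈ H).card : ℤ)) :
    (2 : ℤ) ^ d - c ≤ (𝓗.card : ℤ) := by
  subst hV
  have hmissing_deg : ∀ v ∈ V, #((V.powerset \ 𝓗).filter (v ∈ ·)) ≤ c := by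
    intro v hv
    have hsplit := card_filter_mem_powerset_sdiff_add h𝓗 hv
    have := hdeg v hv
    zify at hsplit ⊢
    linarith
  have hmissing : #(V.powerset \ 𝓗) ≤ c :=
    card_le_of_upClosed sdiff_subset (hher.upClosed_powerset_sdiff V) hmissing_deg (by omega)
  have htotal := card_sdiff_add_card_eq_card h𝓗
  rw [card_powerset] at htotal
  zify at htotal hmissing ⊢
  linarith
end

section
/- Let d ≥ 5 and k ≥ 1 be natural numbers and set n = 2dk. Then there exists a finite set V with |V| = n and a hereditary family 𝓕 of subsets of V with |𝓕| = k·(2^{d+1} − 2d − 1) + 1 such that for every x ∈ V one has |𝓕_x| < |𝓕| − (2^{d−1} − d). In particular, m(n, 2^{d−1} − d) ≤ n(2^d − d − 1/2)/d. -/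
/-!
Split the `2dk` vertices into `2k` blocks `U_i` of size `d` with distinguished points `x_i`.
Since the family is hereditary, its trace at `x` has exactly `|𝓕| - deg x` members, so it
suffices that every vertex lies in more than `2^{d-1} - d` members. Inside the block of `x`
the sets of size at most `d - 2` containing `x` already number `2^{d-1} - d`; one more set
through `x` is `U_i ∖ {x_i}` if `x ≠ x_i`, and the pair `{x_i, x_{i±1}}` if `x = x_i`.
-/

open Finset

section Hereditary

variable {α : Type*} [DecidableEq α] {𝓕 : Finset (Finset α)}

theorem Hereditary.traceAt_eq_filter_notMem (h𝓕 : Hereditary 𝓕) (x : α) :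
    traceAt 𝓕 x = 𝓕.filter (x ∉ ·) := by
  ext F
  simp only [traceAt, mem_image, mem_filter]
  constructor
  · rintro ⟨G, hG, rfl⟩
    exact ⟨h𝓕 G hG _ (erase_subset _ _), notMem_erase _ _⟩
  · rintro ⟨hF, hx⟩
    exact ⟨F, hF, erase_eq_of_notMem hx⟩

theorem Hereditary.card_traceAt_add_card_filter_mem (h𝓕 : Hereditary 𝓕) (x : α) :
    #(traceAt 𝓕 x) + #(𝓕.filter (x ∈ ·)) = #𝓕 := by
  rw [h𝓕.traceAt_eq_filter_notMem, add_comm]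
  exact card_filter_add_card_filter_not _

end Hereditary

section SmallSubsets

variable {α : Type*} [DecidableEq α] (s : Finset α)

theorem card_powerset_filter_card_add_two_le :
    #(s.powerset.filter fun F => #F + 2 ≤ #s) = 2 ^ #s - #s - 1 := by
  rcases (#s).eq_zero_or_pos with hs | hs
  · simp [card_eq_zero.1 hs]
  obtain ⟨m, hm⟩ := Nat.exists_eq_add_one.2 hs
  have hlarge : s.powerset.filter (fun F => ¬ #F + 2 ≤ #s) =
      powersetCard m s ∪ powersetCard (m + 1) s := by
    ext F
    simp only [mem_filter, mem_powerset, mem_union, mem_powersetCard]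
    constructor
    · rintro ⟨hF, hcard⟩
      have := card_le_card hF
      rcases (by omega : #F = m ∨ #F = m + 1) with h | h
      exacts [Or.inl ⟨hF, h⟩, Or.inr ⟨hF, h⟩]
    · rintro (⟨hF, hcard⟩ | ⟨hF, hcard⟩) <;> exact ⟨hF, by omega⟩
  have hdisj : Disjoint (powersetCard m s) (powersetCard (m + 1) s) :=
    disjoint_left.2 fun F h₁ h₂ => by
      rw [mem_powersetCard] at h₁ h₂
      omega
  have hcount := card_filter_add_card_filter_not (s := s.powerset) fun F => #F + 2 ≤ #s
  rw [hlarge, card_union_of_disjoint hdisj, card_powersetCard, card_powersetCard, card_powerset,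
    hm, Nat.choose_succ_self_right, Nat.choose_self] at hcount
  rw [hm]
  omega

variable {s} {x : α}

theorem card_powerset_filter_mem_card_add_two_le (hx : x ∈ s) :
    #(s.powerset.filter fun F => x ∈ F ∧ #F + 2 ≤ #s) = 2 ^ (#s - 1) - #s := by
  have hcard : #(s.erase x) = #s - 1 := card_erase_of_mem hx
  have hpos : 0 < #s := card_pos.2 ⟨x, hx⟩
  rw [card_nbij' (·.erase x) (insert x)
      (t := (s.erase x).powerset.filter fun G => #G + 2 ≤ #(s.erase x)),
    card_powerset_filter_card_add_two_le, hcard]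
  · omega
  · intro F hF
    simp only [coe_filter, mem_powerset, Set.mem_ofPred_eq] at hF ⊢
    refine ⟨erase_subset_erase _ hF.1, ?_⟩
    rw [card_erase_of_mem hF.2.1, hcard]
    have := card_pos.2 ⟨x, hF.2.1⟩
    omega
  · intro G hG
    simp only [coe_filter, mem_powerset, Set.mem_ofPred_eq] at hG ⊢
    refine ⟨insert_subset hx (hG.1.trans (erase_subset _ _)), mem_insert_self _ _, ?_⟩
    have := card_insert_le x G
    omega
  · intro F hF
    exact insert_erase (mem_filter.1 hF).2.1
  · intro G hG
    exact erase_insert fun hxG => notMem_erase x s ((mem_powerset.1 (mem_filter.1 hG).1) hxG)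

end SmallSubsets

section BlockFamily

variable {α : Type*} [DecidableEq α] {s t : Finset α} {x y : α} {F F' : Finset α}

-- The nonempty members of the construction inside a block `s = U_i`, where `x = x_i`.
def blockFamily (s : Finset α) (x : α) : Finset (Finset α) :=
  insert (s.erase x) (s.powerset.filter fun F => F.Nonempty ∧ #F + 2 ≤ #s)

theorem mem_blockFamily :
    F ∈ blockFamily s x ↔ F = s.erase x ∨ F ⊆ s ∧ F.Nonempty ∧ #F + 2 ≤ #s := by
  simp [blockFamily]

theorem subset_of_mem_blockFamily (hF : F ∈ blockFamily s x) : F ⊆ s := by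
  rcases mem_blockFamily.1 hF with rfl | ⟨hF, -⟩
  exacts [erase_subset _ _, hF]

theorem nonempty_of_mem_blockFamily (hs : 2 ≤ #s) (hF : F ∈ blockFamily s x) : F.Nonempty := by
  rcases mem_blockFamily.1 hF with rfl | ⟨-, hF, -⟩
  · rw [← card_pos]
    have := pred_card_le_card_erase (a := x) (s := s)
    omega
  · exact hF

theorem not_card_erase_add_two_le (hx : x ∈ s) : ¬ #(s.erase x) + 2 ≤ #s := by
  rw [card_erase_of_mem hx]
  omega

theorem mem_blockFamily_of_subset (hx : x ∈ s) (hF : F ∈ blockFamily s x) (hF' : F' ⊆ F)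
    (hne : F'.Nonempty) : F' ∈ blockFamily s x := by
  have hF's : F' ⊆ s := hF'.trans (subset_of_mem_blockFamily hF)
  rcases mem_blockFamily.1 hF with rfl | ⟨-, -, hsmall⟩
  · rcases hF'.eq_or_ssubset with rfl | hlt
    · exact hF
    · have := card_lt_card hlt
      rw [card_erase_of_mem hx] at this
      exact mem_blockFamily.2 (Or.inr ⟨hF's, hne, by omega⟩)
  · have := card_le_card hF'
    exact mem_blockFamily.2 (Or.inr ⟨hF's, hne, by omega⟩)

theorem singleton_mem_blockFamily (hy : y ∈ s) (hs : 3 ≤ #s) : {y} ∈ blockFamily s x :=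
  mem_blockFamily.2 (Or.inr ⟨singleton_subset_iff.2 hy, singleton_nonempty y, by simpa⟩)

theorem disjoint_blockFamily (hst : Disjoint s t) (hs : 2 ≤ #s) :
    Disjoint (blockFamily s x) (blockFamily t y) := by
  refine disjoint_left.2 fun F hFs hFt => ?_
  obtain ⟨z, hz⟩ := nonempty_of_mem_blockFamily hs hFs
  exact disjoint_left.1 hst (subset_of_mem_blockFamily hFs hz) (subset_of_mem_blockFamily hFt hz)

theorem card_blockFamily (hx : x ∈ s) (hs : 2 ≤ #s) : #(blockFamily s x) = 2 ^ #s - #s - 1 := by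
  have hsmall : s.powerset.filter (fun F => F.Nonempty ∧ #F + 2 ≤ #s)
      = (s.powerset.filter fun F => #F + 2 ≤ #s).erase ∅ := by
    ext F
    simp only [mem_filter, mem_erase, nonempty_iff_ne_empty]
    tauto
  have hempty : ∅ ∈ s.powerset.filter fun F => #F + 2 ≤ #s := by simpa using hs
  rw [blockFamily, card_insert_of_notMem, hsmall, card_erase_add_one hempty,
    card_powerset_filter_card_add_two_le]
  simp [not_card_erase_add_two_le hx]

theorem card_filter_mem_blockFamily (hx : x ∈ s) (hy : y ∈ s) :
    #((blockFamily s x).filter (y ∈ ·)) = 2 ^ (#s - 1) - #s + if y = x then 0 else 1 := by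
  have hsmall : (s.powerset.filter fun F => F.Nonempty ∧ #F + 2 ≤ #s).filter (y ∈ ·)
      = s.powerset.filter fun F => y ∈ F ∧ #F + 2 ≤ #s := by
    rw [filter_filter]
    exact filter_congr fun F _ => ⟨fun h => ⟨h.2, h.1.2⟩, fun h => ⟨⟨⟨y, h.1⟩, h.2⟩, h.1⟩⟩
  rw [blockFamily, filter_insert, ← card_powerset_filter_mem_card_add_two_le hy, ← hsmall]
  have hnot :
      s.erase x ∉ (s.powerset.filter fun F => F.Nonempty ∧ #F + 2 ≤ #s).filter (y ∈ ·) := by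
    simp [not_card_erase_add_two_le hx]
  by_cases hyx : y = x
  · simp [hyx]
  · simp [hyx, hy, card_insert_of_notMem hnot]

end BlockFamily

section Construction

variable {d k i j v : ℕ}

def block (d i : ℕ) : Finset ℕ := Ico (d * i) (d * i + d)

def pairSet (d j : ℕ) : Finset ℕ := {d * (2 * j), d * (2 * j + 1)}

theorem card_block : #(block d i) = d := by
  simp [block]

theorem mem_block (hd : 0 < d) : v ∈ block d i ↔ v / d = i := by
  rw [block, mem_Ico, Nat.div_eq_iff hd, mul_comm i]
  omega

theorem mul_mem_block (hd : 0 < d) : d * i ∈ block d i := by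
  rw [mem_block hd, Nat.mul_div_cancel_left _ hd]

theorem disjoint_block (hd : 0 < d) (hij : i ≠ j) : Disjoint (block d i) (block d j) :=
  disjoint_left.2 fun _ hi hj => hij <| ((mem_block hd).1 hi).symm.trans ((mem_block hd).1 hj)

theorem lt_two_mul_mul_iff_div_lt (hd : 0 < d) : v < 2 * d * k ↔ v / d < 2 * k := by
  rw [Nat.div_lt_iff_lt_mul hd, mul_right_comm]

theorem block_subset_range (hd : 0 < d) (hi : i < 2 * k) : block d i ⊆ range (2 * d * k) :=
  fun _ hv => mem_range.2 <| (lt_two_mul_mul_iff_div_lt hd).2 <| ((mem_block hd).1 hv).symm ▸ hi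

theorem not_pairSet_subset_block (hd : 0 < d) : ¬ pairSet d j ⊆ block d i := by
  intro h
  have h₀ := (mem_block hd).1 (h (mem_insert_self _ _))
  have h₁ := (mem_block hd).1 (h (mem_insert_of_mem (mem_singleton_self _)))
  rw [Nat.mul_div_cancel_left _ hd] at h₀ h₁
  omega

theorem pairSet_injective (hd : 0 < d) : Function.Injective (pairSet d) := by
  intro j j' h
  have : d * (2 * j) ∈ pairSet d j' := h ▸ mem_insert_self _ _
  simp only [pairSet, mem_insert, mem_singleton, Nat.mul_left_cancel_iff hd] at this
  omega

theorem pairSet_subset_range (hd : 0 < d) (hj : j < k) : pairSet d j ⊆ range (2 * d * k) :=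
  insert_subset (block_subset_range hd (by omega) (mul_mem_block hd)) <|
    singleton_subset_iff.2 <| block_subset_range hd (by omega) (mul_mem_block hd)

-- `U_i = [d i, d i + d)` with `x_i = d i`; `∅` is added once, so that the remaining pieces
-- are pairwise disjoint.
def nonlocalFamily (d k : ℕ) : Finset (Finset ℕ) :=
  insert ∅ ((range (2 * k)).biUnion (fun i => blockFamily (block d i) (d * i)) ∪
    (range k).image (pairSet d))

theorem mem_nonlocalFamily {F : Finset ℕ} :
    F ∈ nonlocalFamily d k ↔ F = ∅ ∨ (∃ i < 2 * k, F ∈ blockFamily (block d i) (d * i)) ∨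
      ∃ j < k, pairSet d j = F := by
  simp [nonlocalFamily]

theorem card_nonlocalFamily (hd : 2 ≤ d) :
    #(nonlocalFamily d k) = k * (2 ^ (d + 1) - 2 * d - 1) + 1 := by
  have hd₀ : 0 < d := by omega
  have hdisj : Disjoint ((range (2 * k)).biUnion fun i => blockFamily (block d i) (d * i))
      ((range k).image (pairSet d)) := by
    simp only [disjoint_left, mem_biUnion, mem_image, not_exists, not_and]
    rintro _ ⟨i, -, hF⟩ j - rfl
    exact not_pairSet_subset_block hd₀ (subset_of_mem_blockFamily hF)
  have hempty : ∅ ∉ (range (2 * k)).biUnion (fun i => blockFamily (block d i) (d * i)) ∪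
      (range k).image (pairSet d) := by
    simp only [mem_union, mem_biUnion, mem_image, not_or, not_exists, not_and]
    refine ⟨fun i _ h => ?_, fun j _ h => ?_⟩
    · exact not_nonempty_empty (nonempty_of_mem_blockFamily (by rwa [card_block]) h)
    · exact insert_ne_empty _ _ h
  have hblocks : (range (2 * k) : Set ℕ).PairwiseDisjoint
      fun i => blockFamily (block d i) (d * i) := fun i _ j _ hij =>
    disjoint_blockFamily (disjoint_block hd₀ hij) (by rwa [card_block])
  have hpow : 2 ^ (d + 1) - 2 * d - 1 = 2 * (2 ^ d - d - 1) + 1 := by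
    have := Nat.lt_two_pow_self (n := d)
    rw [pow_succ]
    omega
  rw [nonlocalFamily, card_insert_of_notMem hempty, card_union_of_disjoint hdisj,
    card_biUnion hblocks, card_image_of_injective _ (pairSet_injective hd₀)]
  have hblock : ∀ i, #(blockFamily (block d i) (d * i)) = 2 ^ d - d - 1 := fun i => by
    rw [card_blockFamily (mul_mem_block hd₀) (by rwa [card_block]), card_block]
  simp only [hblock, sum_const, card_range, smul_eq_mul, hpow]
  ring

theorem nonlocalFamily_subset_powerset (hd : 0 < d) :
    nonlocalFamily d k ⊆ (range (2 * d * k)).powerset := by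
  intro F hF
  rw [mem_powerset]
  rcases mem_nonlocalFamily.1 hF with rfl | ⟨i, hi, hF⟩ | ⟨j, hj, rfl⟩
  · exact empty_subset _
  · exact (subset_of_mem_blockFamily hF).trans (block_subset_range hd hi)
  · exact pairSet_subset_range hd hj

theorem singleton_mem_nonlocalFamily (hd : 3 ≤ d) (hv : v < 2 * d * k) :
    {v} ∈ nonlocalFamily d k := by
  have hd₀ : 0 < d := by omega
  refine mem_nonlocalFamily.2 (Or.inr (Or.inl ⟨v / d, (lt_two_mul_mul_iff_div_lt hd₀).1 hv, ?_⟩))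
  exact singleton_mem_blockFamily ((mem_block hd₀).2 rfl) (by rwa [card_block])

theorem hereditary_nonlocalFamily (hd : 3 ≤ d) : Hereditary (nonlocalFamily d k) := by
  intro F hF F' hF'
  rcases F'.eq_empty_or_nonempty with rfl | hne
  · exact mem_insert_self _ _
  rcases mem_nonlocalFamily.1 hF with rfl | ⟨i, hi, hF⟩ | ⟨j, hj, rfl⟩
  · exact absurd (subset_empty.1 hF') hne.ne_empty
  · exact mem_nonlocalFamily.2 (Or.inr (Or.inl ⟨i, hi, mem_blockFamily_of_subset
      (mul_mem_block (by omega)) hF hF' hne⟩))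
  · rcases hF'.eq_or_ssubset with rfl | hlt
    · exact hF
    obtain ⟨v, rfl⟩ : ∃ v, F' = {v} := by
      have := card_lt_card hlt
      have : #(pairSet d j) ≤ 2 := card_le_two
      exact card_eq_one.1 (by have := hne.card_pos; omega)
    exact singleton_mem_nonlocalFamily hd
      (mem_range.1 (pairSet_subset_range (by omega) hj (hF' (mem_singleton_self v))))

theorem le_card_filter_mem_nonlocalFamily (hd : 0 < d) (hv : v < 2 * d * k) :
    2 ^ (d - 1) - d + 1 ≤ #((nonlocalFamily d k).filter (v ∈ ·)) := by
  set i := v / d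
  have hi : i < 2 * k := (lt_two_mul_mul_iff_div_lt hd).1 hv
  have hvi : v ∈ block d i := (mem_block hd).2 rfl
  have hblock : blockFamily (block d i) (d * i) ⊆ nonlocalFamily d k := fun F hF =>
    mem_nonlocalFamily.2 (Or.inr (Or.inl ⟨i, hi, hF⟩))
  have hcard := card_filter_mem_blockFamily (mul_mem_block hd) hvi
  rw [card_block] at hcard
  by_cases hhead : v = d * i
  · obtain ⟨j, hj, hvj⟩ : ∃ j < k, v ∈ pairSet d j := by
      obtain ⟨j, hij | hij⟩ := Nat.even_or_odd' i <;>
        exact ⟨j, by omega, by simp [pairSet, hhead, hij]⟩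
    have hpair : pairSet d j ∉ (blockFamily (block d i) (d * i)).filter (v ∈ ·) :=
      fun h => not_pairSet_subset_block hd (subset_of_mem_blockFamily (mem_filter.1 h).1)
    have hsub : insert (pairSet d j) ((blockFamily (block d i) (d * i)).filter (v ∈ ·)) ⊆
        (nonlocalFamily d k).filter (v ∈ ·) :=
      insert_subset (mem_filter.2 ⟨mem_nonlocalFamily.2 (Or.inr (Or.inr ⟨j, hj, rfl⟩)), hvj⟩)
        (filter_subset_filter _ hblock)
    have := card_le_card hsub
    rwa [card_insert_of_notMem hpair, hcard, if_pos hhead] at this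
  · have := card_le_card (filter_subset_filter (v ∈ ·) hblock)
    rwa [hcard, if_neg hhead] at this

end Construction

theorem nonlocal_construction_general (d k n : ℕ) (hd : 5 ≤ d) (hn : n = 2 * d * k) :
    ∃ V : Finset ℕ, V.card = n ∧
      ∃ 𝓕 : Finset (Finset ℕ), 𝓕 ⊆ V.powerset ∧ Hereditary 𝓕 ∧
        𝓕.card = k * (2 ^ (d + 1) - 2 * d - 1) + 1 ∧
        ∀ x ∈ V, ((traceAt 𝓕 x).card : ℤ) < (𝓕.card : ℤ) - ((2 : ℤ) ^ (d - 1) - d) := by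
  subst hn
  have hered := hereditary_nonlocalFamily (k := k) (by omega : 3 ≤ d)
  refine ⟨range (2 * d * k), card_range _, nonlocalFamily d k,
    nonlocalFamily_subset_powerset (by omega), hered, card_nonlocalFamily (by omega), ?_⟩
  intro x hx
  have hsplit := hered.card_traceAt_add_card_filter_mem x
  have hdeg := le_card_filter_mem_nonlocalFamily (by omega) (mem_range.1 hx)
  have hpow : d ≤ 2 ^ (d - 1) := by
    have := Nat.lt_two_pow_self (n := d - 1)
    omega
  have hcast : (2 : ℤ) ^ (d - 1) = ((2 ^ (d - 1) : ℕ) : ℤ) := by push_cast; rfl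
  rw [hcast]
  omega

/-- Construction 5.1: for `d ≥ 5`, `k ≥ 1` and `n = 2dk` there is a hereditary family `𝓕`
on an `n`-set `V` with `|𝓕| = k(2^{d+1} − 2d − 1) + 1` such that every `x ∈ V` satisfies
`|𝓕_x| < |𝓕| − (2^{d−1} − d)`. -/
theorem nonlocal_construction (d k n : ℕ) (hd : 5 ≤ d) (hk : 1 ≤ k) (hn : n = 2 * d * k) :
    ∃ V : Finset ℕ, V.card = n ∧
      ∃ 𝓕 : Finset (Finset ℕ), 𝓕 ⊆ V.powerset ∧ Hereditary 𝓕 ∧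
        𝓕.card = k * (2 ^ (d + 1) - 2 * d - 1) + 1 ∧
        ∀ x ∈ V, ((traceAt 𝓕 x).card : ℤ) < (𝓕.card : ℤ) - ((2 : ℤ) ^ (d - 1) - d) :=
  nonlocal_construction_general d k n hd hn
end
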